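/- For all A, B ∈ 𝓜 and every x > 0, one has ρ_{A∘B}(x) = ρ_A(x) · ρ_B(x · ρ_A(x)) (equivalently, ρ_{A∘B}(x) = ρ_A(x) · ρ_B(S_A(x)), using ρ_B(0) = 0 when S_A(x) = 0). -/

import Mathlib

open MeasureTheory Filter Set Topology

noncomputable section

namespace UPN

/-- The half line `[0,∞)` viewed as a subset of `ℝ`. -/
def Ray : Set ℝ := Set.Ici 0

/-- The indicator function `1_A`. -/
def ind (A : Set ℝ) : ℝ → ℝ := Set.indicator A fun _ => (1 : ℝ)

/-- The collection `𝓜` of countable unions `⋃ᵢ [a_{2i-1}, a_{2i})` for a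
nondecreasing nonnegative sequence `a`. -/
def Mcal : Set (Set ℝ) :=
  {A | ∃ a : ℕ → ℝ, 0 ≤ a 0 ∧ Monotone a ∧
        A = ⋃ i : ℕ, Set.Ico (a (2 * i)) (a (2 * i + 1))}

/-- The density function `ρ_A`: `ρ_A(0) = 0` and `ρ_A(x) = (1/x)∫₀ˣ 1_A(y) dy`. -/
def rho (A : Set ℝ) (x : ℝ) : ℝ :=
  if x = 0 then 0 else (1 / x) * ∫ y in (0:ℝ)..x, ind A y

/-- The collection `𝓒` of elements of `𝓜` having natural density. -/
def Ccal : Set (Set ℝ) :=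
  {A | A ∈ Mcal ∧ ∃ l : ℝ, Tendsto (rho A) atTop (𝓝 l)}

/-- The natural density `λ(A) = lim_{x→∞} ρ_A(x)`. -/
def lam (A : Set ℝ) : ℝ := limUnder atTop (rho A)

/-- `S_A(x) = m(A ∩ [0,x))`. -/
def Sfn (A : Set ℝ) (x : ℝ) : ℝ := (volume (A ∩ Set.Ico 0 x)).toReal

/-- The thinning operation `A ∘ B = {x : x ∈ A ∧ S_A(x) ∈ B}`. -/
def thin (A B : Set ℝ) : Set ℝ := {x | x ∈ A ∧ Sfn A x ∈ B}

/-- An f-system on `[0,∞)`: a nonempty collection of subsets of `[0,∞)` closed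
under complements (in `[0,∞)`) and finite disjoint unions. -/
structure IsFSystem (F : Set (Set ℝ)) : Prop where
  nonempty : F.Nonempty
  subset_ray : ∀ A ∈ F, A ⊆ Ray
  compl_mem : ∀ A ∈ F, Ray \ A ∈ F
  union_mem : ∀ A ∈ F, ∀ B ∈ F, A ∩ B = ∅ → A ∪ B ∈ F

/-- A probability pair `(F, μ)` on `[0,∞)`: `F` is an f-system and `μ` is a finitely
additive probability measure on `F` with values in `[0,1]` and `μ([0,∞)) = 1`. -/
structure IsProbPair (F : Set (Set ℝ)) (μ : Set ℝ → ℝ) : Prop where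
  fsystem : IsFSystem F
  nonneg : ∀ A ∈ F, 0 ≤ μ A
  le_one : ∀ A ∈ F, μ A ≤ 1
  ray_eq_one : μ Ray = 1
  additive : ∀ A ∈ F, ∀ B ∈ F, A ∩ B = ∅ → μ (A ∪ B) = μ A + μ B

/-- A weakly thinnable pair (WTP). -/
structure IsWTP (F : Set (Set ℝ)) (μ : Set ℝ → ℝ) : Prop where
  pair : IsProbPair F μ
  Ccal_subset : Ccal ⊆ F
  subset_Mcal : F ⊆ Mcal
  P1 : ∀ C ∈ Ccal, ∀ A ∈ F, thin C A ∈ F ∧ μ (thin C A) = μ C * μ A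
  P2 : ∀ A ∈ F, ∀ B ∈ F, (∀ x : ℝ, Sfn B x ≤ Sfn A x) → μ B ≤ μ A
  P3 : ∀ c : ℝ, 0 ≤ c → μ (Set.Ici c) = 1

/-- Coherence of a probability measure `μ` on an f-system `F` on `[0,∞)`. -/
def Coherent (F : Set (Set ℝ)) (μ : Set ℝ → ℝ) : Prop :=
  ∀ (n : ℕ) (a : Fin n → ℝ) (A : Fin n → Set ℝ), (∀ i, A i ∈ F) →
    0 ≤ ⨆ x : Ray, ∑ i, a i * (ind (A i) ↑x - μ (A i))

/-- `σ_A(D,x) = (1/D) ∫_x^{x+D} 1_A(y) dy`. -/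
def sigmaFn (A : Set ℝ) (D x : ℝ) : ℝ := (1 / D) * ∫ y in x..(x + D), ind A y

/-- `U(A) = limsup_{D→∞} sup_{x>0} σ_A(D,x)`. -/
def Ufn (A : Set ℝ) : ℝ :=
  limsup (fun D => ⨆ x : Set.Ioi (0:ℝ), sigmaFn A D ↑x) atTop

/-- `L(A) = liminf_{D→∞} inf_{x>0} σ_A(D,x)`. -/
def Lfn (A : Set ℝ) : ℝ :=
  liminf (fun D => ⨅ x : Set.Ioi (0:ℝ), sigmaFn A D ↑x) atTop

/-- `𝓦^uni = {A ∈ 𝓜 : L(A) = U(A)}`. -/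
def Wuni : Set (Set ℝ) := {A | A ∈ Mcal ∧ Lfn A = Ufn A}

/-- `log(A) = {log a : a ∈ A ∩ [1,∞)}`. -/
def logSet (A : Set ℝ) : Set ℝ := Real.log '' (A ∩ Set.Ici 1)

/-- `𝓐^uni = {A ∈ 𝓜 : log(A) ∈ 𝓦^uni}`. -/
def Auni : Set (Set ℝ) := {A | A ∈ Mcal ∧ logSet A ∈ Wuni}

/-- `α(A) = λ(log(A))`. -/
def alphaFn (A : Set ℝ) : ℝ := lam (logSet A)

/-- `ξ_A(D,x) = (1/log D) ∫_x^{Dx} ρ_A(y)/y dy`. -/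
def xi (A : Set ℝ) (D x : ℝ) : ℝ :=
  (1 / Real.log D) * ∫ y in x..(D * x), rho A y / y

/-- Membership in `𝓟`: `s` is a sequence in `(1,∞)` tending to `∞` and `f` is a
sequence in `(1,∞)`. -/
def memP (s f : ℕ → ℝ) : Prop :=
  (∀ n, 1 < s n) ∧ Tendsto s atTop atTop ∧ ∀ n, 1 < f n

/-- `𝓐^{s,f} = {A ∈ 𝓜 : lim_n ξ_A(s_n,f_n) exists}`. -/
def Asf (s f : ℕ → ℝ) : Set (Set ℝ) :=
  {A | A ∈ Mcal ∧ ∃ l : ℝ, Tendsto (fun n => xi A (s n) (f n)) atTop (𝓝 l)}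

/-- `α^{s,f}(A) = lim_n ξ_A(s_n,f_n)`. -/
def alphasf (s f : ℕ → ℝ) (A : Set ℝ) : ℝ :=
  limUnder atTop fun n => xi A (s n) (f n)

/-- `τ_A(C,j)`; here `j : ℕ` starting from `0` corresponds to the interval
`[C^j, C^{j+1})`, i.e. to the paper's `τ_A(C, j+1)`. -/
def tau (A : Set ℝ) (C : ℝ) (j : ℕ) : ℝ :=
  (1 / (C ^ j * (C - 1))) * ∫ y in (C ^ j : ℝ)..(C ^ (j + 1)), ind A y

/-- `U^*(C,A) = limsup_{n→∞} sup_k (1/n) Σ_{j=k}^{k+n-1} τ_A(C,j)`. -/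
def Ustar (C : ℝ) (A : Set ℝ) : ℝ :=
  limsup (fun n : ℕ => ⨆ k : ℕ, (1 / (n : ℝ)) * ∑ i ∈ Finset.range n, tau A C (k + i)) atTop

/-! On `A ∩ [0, x)` the map `S_A` is a measure-preserving change of variables onto
`[0, S_A(x))`: it is monotone, continuous, and the points of `A ∩ [0, x)` where `S_A < t` form
`A ∩ [0, u)` for some `u` with `S_A(u) = t`. Pushing Lebesgue measure forward along `S_A` therefore
gives `S_{A∘B}(x) = S_B(S_A(x))`, and dividing by `x` gives the formula for `ρ`. -/

theorem _root_.Monotone.exists_lt_iff_lt_of_continuous {f : ℝ → ℝ} (hmono : Monotone f)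
    (hcont : Continuous f) {a b t : ℝ} (hab : a ≤ b) (ht : t ∈ Icc (f a) (f b)) :
    ∃ u ∈ Icc a b, f u = t ∧ ∀ y, a ≤ y → (f y < t ↔ y < u) := by
  set s := Icc a b ∩ f ⁻¹' Ici t
  have hs_closed : IsClosed s := isClosed_Icc.inter (isClosed_Ici.preimage hcont)
  have hs_bdd : BddBelow s := ⟨a, fun z hz => hz.1.1⟩
  obtain ⟨z, hz, hfz⟩ := intermediate_value_Icc hab hcont.continuousOn ht
  have hzs : z ∈ s := ⟨hz, hfz.ge⟩
  have hu : sInf s ∈ s := hs_closed.csInf_mem ⟨z, hzs⟩ hs_bdd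
  refine ⟨sInf s, hu.1, le_antisymm (hfz ▸ hmono (csInf_le hs_bdd hzs)) hu.2, fun y hy => ?_⟩
  constructor
  · intro hyt
    by_contra! huy
    exact (hyt.trans_le hu.2).not_ge (hmono huy)
  · intro hyu
    by_contra! hty
    exact hyu.not_ge (csInf_le hs_bdd ⟨⟨hy, hyu.le.trans hu.1.2⟩, hty⟩)

lemma measurableSet_of_mem_Mcal {A : Set ℝ} (hA : A ∈ Mcal) : MeasurableSet A := by
  obtain ⟨a, -, -, rfl⟩ := hA
  exact MeasurableSet.iUnion fun i => measurableSet_Ico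

lemma volume_inter_Ico_ne_top (A : Set ℝ) (x : ℝ) : volume (A ∩ Ico 0 x) ≠ ⊤ :=
  ((measure_mono inter_subset_right).trans_lt measure_Ico_lt_top).ne

lemma ofReal_Sfn (A : Set ℝ) (x : ℝ) : ENNReal.ofReal (Sfn A x) = volume (A ∩ Ico 0 x) :=
  ENNReal.ofReal_toReal (volume_inter_Ico_ne_top A x)

lemma Sfn_nonneg (A : Set ℝ) (x : ℝ) : 0 ≤ Sfn A x := ENNReal.toReal_nonneg

@[simp]
lemma Sfn_zero (A : Set ℝ) : Sfn A 0 = 0 := by simp [Sfn]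

lemma Sfn_mono (A : Set ℝ) : Monotone (Sfn A) := fun _ b hab =>
  ENNReal.toReal_mono (volume_inter_Ico_ne_top A b)
    (measure_mono (inter_subset_inter_right _ (Ico_subset_Ico_right hab)))

lemma Sfn_lipschitz (A : Set ℝ) : LipschitzWith 1 (Sfn A) := by
  refine LipschitzWith.of_le_add fun x y => ?_
  have hsub : A ∩ Ico 0 x ⊆ (A ∩ Ico 0 y) ∪ Ico y x := fun z ⟨hzA, hz⟩ =>
    (Ico_subset_Ico_union_Ico hz).imp (fun h => ⟨hzA, h⟩) id
  have hvol : volume (A ∩ Ico 0 x) ≤ volume (A ∩ Ico 0 y) + ENNReal.ofReal (dist x y) :=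
    calc volume (A ∩ Ico 0 x) ≤ volume (A ∩ Ico 0 y) + volume (Ico y x) :=
          (measure_mono hsub).trans (measure_union_le _ _)
      _ ≤ volume (A ∩ Ico 0 y) + ENNReal.ofReal (dist x y) := by
          rw [Real.volume_Ico, Real.dist_eq]
          gcongr
          exact le_abs_self _
  rw [← ofReal_Sfn, ← ofReal_Sfn, ← ENNReal.ofReal_add (Sfn_nonneg A y) dist_nonneg] at hvol
  exact (ENNReal.ofReal_le_ofReal_iff (add_nonneg (Sfn_nonneg A y) dist_nonneg)).1 hvol

lemma Sfn_continuous (A : Set ℝ) : Continuous (Sfn A) := (Sfn_lipschitz A).continuous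

lemma volume_inter_Ico_inter_preimage_Sfn_Iio (A : Set ℝ) {x : ℝ} (hx : 0 ≤ x) (t : ℝ) :
    volume (A ∩ Ico 0 x ∩ Sfn A ⁻¹' Iio t) = volume (Ico 0 (min t (Sfn A x))) := by
  rcases le_or_gt t 0 with ht0 | ht0
  · have hempty : A ∩ Ico 0 x ∩ Sfn A ⁻¹' Iio t = ∅ :=
      eq_empty_of_forall_notMem fun y hy => (Sfn_nonneg A y).not_gt (hy.2.trans_le ht0)
    rw [hempty, Ico_eq_empty ((min_le_left _ _).trans ht0).not_gt, measure_empty]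
  rcases le_or_gt t (Sfn A x) with htx | htx
  · obtain ⟨u, hu, hut, hlt⟩ := (Sfn_mono A).exists_lt_iff_lt_of_continuous (Sfn_continuous A)
      hx ⟨(Sfn_zero A).symm ▸ ht0.le, htx⟩
    have hset : A ∩ Ico 0 x ∩ Sfn A ⁻¹' Iio t = A ∩ Ico 0 u := by
      ext y
      simp only [mem_inter_iff, mem_Ico, mem_preimage, mem_Iio]
      constructor
      · rintro ⟨⟨hyA, hy0, -⟩, hyt⟩
        exact ⟨hyA, hy0, (hlt y hy0).1 hyt⟩
      · rintro ⟨hyA, hy0, hyu⟩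
        exact ⟨⟨hyA, hy0, hyu.trans_le hu.2⟩, (hlt y hy0).2 hyu⟩
    rw [hset, min_eq_left htx, ← ofReal_Sfn, hut, Real.volume_Ico, sub_zero]
  · have hall : A ∩ Ico 0 x ∩ Sfn A ⁻¹' Iio t = A ∩ Ico 0 x :=
      inter_eq_left.2 fun y hy => (Sfn_mono A hy.2.2.le).trans_lt htx
    rw [hall, min_eq_right htx.le, ← ofReal_Sfn, Real.volume_Ico, sub_zero]

lemma map_Sfn_restrict_inter_Ico (A : Set ℝ) {x : ℝ} (hx : 0 ≤ x) :
    (volume.restrict (A ∩ Ico 0 x)).map (Sfn A) = volume.restrict (Ico 0 (Sfn A x)) := by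
  have hmeas : Measurable (Sfn A) := (Sfn_continuous A).measurable
  have : IsFiniteMeasure (volume.restrict (A ∩ Ico 0 x)) :=
    ⟨by simpa using (volume_inter_Ico_ne_top A x).lt_top⟩
  refine ext_of_generate_finite (range Iio)
    (by rw [BorelSpace.measurable_eq (α := ℝ), borel_eq_generateFrom_Iio]) isPiSystem_Iio ?_ ?_
  · rintro _ ⟨t, rfl⟩
    rw [Measure.map_apply hmeas measurableSet_Iio, Measure.restrict_apply measurableSet_Iio,
      Measure.restrict_apply (measurableSet_Iio.preimage hmeas), inter_comm,
      volume_inter_Ico_inter_preimage_Sfn_Iio A hx, inter_comm, Ico_inter_Iio, min_comm]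
  · rw [Measure.map_apply hmeas MeasurableSet.univ, preimage_univ, Measure.restrict_apply_univ,
      Measure.restrict_apply_univ, ← ofReal_Sfn, Real.volume_Ico, sub_zero]

lemma Sfn_thin (A : Set ℝ) {B : Set ℝ} (hB : MeasurableSet B) {x : ℝ} (hx : 0 ≤ x) :
    Sfn (thin A B) x = Sfn B (Sfn A x) := by
  have hmeas : Measurable (Sfn A) := (Sfn_continuous A).measurable
  have hset : thin A B ∩ Ico 0 x = Sfn A ⁻¹' B ∩ (A ∩ Ico 0 x) := by
    ext y
    simp only [thin, mem_inter_iff, mem_ofPred_eq, mem_preimage]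
    tauto
  have hvol : volume (thin A B ∩ Ico 0 x) = volume (B ∩ Ico 0 (Sfn A x)) := by
    rw [hset, ← Measure.restrict_apply (hB.preimage hmeas), ← Measure.map_apply hmeas hB,
      map_Sfn_restrict_inter_Ico A hx, Measure.restrict_apply hB]
  exact congrArg ENNReal.toReal hvol

lemma integral_ind_eq_Sfn {S : Set ℝ} (hS : MeasurableSet S) {x : ℝ} (hx : 0 ≤ x) :
    ∫ y in (0:ℝ)..x, ind S y = Sfn S x := by
  rw [intervalIntegral.integral_of_le hx, integral_Ioc_eq_integral_Ioo,
    ← integral_Ico_eq_integral_Ioo, show ind S = S.indicator 1 from rfl,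
    integral_indicator_one hS, measureReal_restrict_apply hS]
  rfl

lemma rho_eq_Sfn_div {S : Set ℝ} (hS : MeasurableSet S) {x : ℝ} (hx : 0 ≤ x) :
    rho S x = Sfn S x / x := by
  rcases hx.eq_or_lt with rfl | hx
  · simp [rho]
  · rw [rho, if_neg hx.ne', integral_ind_eq_Sfn hS hx.le, one_div_mul_eq_div]

/-- For `A, B ∈ 𝓜` and `x > 0`:
`ρ_{A∘B}(x) = ρ_A(x) · ρ_B(x·ρ_A(x))` and equivalently
`ρ_{A∘B}(x) = ρ_A(x) · ρ_B(S_A(x))`. -/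
theorem stmt12 (A B : Set ℝ) (hA : A ∈ Mcal) (hB : B ∈ Mcal)
    (x : ℝ) (hx : 0 < x) :
    rho (thin A B) x = rho A x * rho B (x * rho A x) ∧
    rho (thin A B) x = rho A x * rho B (Sfn A x) := by
  have hAm := measurableSet_of_mem_Mcal hA
  have hBm := measurableSet_of_mem_Mcal hB
  have hthin : MeasurableSet (thin A B) := hAm.inter (hBm.preimage (Sfn_continuous A).measurable)
  have hSA : x * rho A x = Sfn A x := by
    rw [rho_eq_Sfn_div hAm hx.le]
    field_simp
  have hrho : rho (thin A B) x = rho A x * rho B (Sfn A x) := by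
    rw [rho_eq_Sfn_div hthin hx.le, Sfn_thin A hBm hx.le, rho_eq_Sfn_div hAm hx.le,
      rho_eq_Sfn_div hBm (Sfn_nonneg A x)]
    rcases eq_or_ne (Sfn A x) 0 with h0 | h0
    · simp [h0]
    · field_simp
  exact ⟨hSA ▸ hrho, hrho⟩

end UPN
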